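/- arXiv:2601.08969 — 8 statements merged into one kernel-verified Lean document; each statement's English description precedes it below -/
import Mathlib

section
/- For every positive integer d and every complex matrix O indexed by Fin d × Fin d, the partial transpose satisfies ‖O^{T2}‖_op ≤ d · ‖O‖_op. -/
/-- The ℓ²→ℓ² operator norm of a matrix. -/
noncomputable def opNorm {n : Type*} [Fintype n] [DecidableEq n] (M : Matrix n n ℂ) : ℝ :=
  ‖LinearMap.toContinuousLinearMap (Matrix.toEuclideanLin M)‖

/-- The partial transpose: `(O^{T2})_{(x,z),(y,w)} = O_{(x,w),(y,z)}`. -/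
def ptrans {d : ℕ} (O : Matrix (Fin d × Fin d) (Fin d × Fin d) ℂ) :
    Matrix (Fin d × Fin d) (Fin d × Fin d) ℂ :=
  Matrix.of fun p q => O (p.1, q.2) (q.1, p.2)

open scoped BigOperators
open Matrix in
lemma _dummy : True := trivial

/-- Squared Frobenius norm. -/
noncomputable def frobSq {n : Type*} [Fintype n] (M : Matrix n n ℂ) : ℝ :=
  ∑ i, ∑ j, ‖M i j‖ ^ 2

lemma frobSq_nonneg {n : Type*} [Fintype n] (M : Matrix n n ℂ) : 0 ≤ frobSq M :=
  Finset.sum_nonneg fun _ _ => Finset.sum_nonneg fun _ _ => sq_nonneg _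

lemma opNorm_le_sqrt_frobSq {n : Type*} [Fintype n] [DecidableEq n] (M : Matrix n n ℂ) :
    opNorm M ≤ Real.sqrt (frobSq M) := by
  apply ContinuousLinearMap.opNorm_le_bound _ (Real.sqrt_nonneg _)
  intro x
  have hfx : (LinearMap.toContinuousLinearMap (Matrix.toEuclideanLin M)) x
      = Matrix.toEuclideanLin M x := rfl
  rw [hfx]
  have hx2 : ‖x‖ = Real.sqrt (∑ j, ‖x j‖ ^ 2) := EuclideanSpace.norm_eq x
  have hMx : ‖Matrix.toEuclideanLin M x‖
      = Real.sqrt (∑ i, ‖∑ j, M i j * x j‖ ^ 2) := by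
    rw [EuclideanSpace.norm_eq]
    rfl
  rw [hMx, hx2, ← Real.sqrt_mul (frobSq_nonneg M)]
  apply Real.sqrt_le_sqrt
  have key : ∀ i : n, ‖∑ j, M i j * x j‖ ^ 2
      ≤ (∑ j, ‖M i j‖ ^ 2) * (∑ j, ‖x j‖ ^ 2) := by
    intro i
    have h1 : ‖∑ j, M i j * x j‖ ≤ ∑ j, ‖M i j‖ * ‖x j‖ := by
      refine le_trans (norm_sum_le _ _) ?_
      exact Finset.sum_le_sum fun j _ => le_of_eq (norm_mul _ _)
    have h2 : (∑ j, ‖M i j‖ * ‖x j‖) ^ 2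
        ≤ (∑ j, ‖M i j‖ ^ 2) * (∑ j, ‖x j‖ ^ 2) := by
      simpa using Finset.sum_mul_sq_le_sq_mul_sq Finset.univ
        (fun j => ‖M i j‖) (fun j => ‖x j‖)
    calc ‖∑ j, M i j * x j‖ ^ 2 ≤ (∑ j, ‖M i j‖ * ‖x j‖) ^ 2 := by
          apply pow_le_pow_left₀ (norm_nonneg _) h1
      _ ≤ _ := h2
  calc ∑ i, ‖∑ j, M i j * x j‖ ^ 2
      ≤ ∑ i, (∑ j, ‖M i j‖ ^ 2) * (∑ j, ‖x j‖ ^ 2) :=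
        Finset.sum_le_sum fun i _ => key i
    _ = frobSq M * (∑ j, ‖x j‖ ^ 2) := by rw [frobSq, ← Finset.sum_mul]

lemma col_sq_le {n : Type*} [Fintype n] [DecidableEq n] (M : Matrix n n ℂ) (j : n) :
    ∑ i, ‖M i j‖ ^ 2 ≤ opNorm M ^ 2 := by
  have h := (LinearMap.toContinuousLinearMap (Matrix.toEuclideanLin M)).le_opNorm
    (EuclideanSpace.single j (1 : ℂ))
  have hs : ‖EuclideanSpace.single j (1 : ℂ)‖ = 1 := by
    rw [EuclideanSpace.norm_single]; simp
  rw [hs, mul_one] at h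
  have happ : (LinearMap.toContinuousLinearMap (Matrix.toEuclideanLin M))
      (EuclideanSpace.single j (1 : ℂ))
      = (WithLp.equiv 2 (n → ℂ)).symm (Matrix.mulVec M (Pi.single j 1)) := by
    rw [show (LinearMap.toContinuousLinearMap (Matrix.toEuclideanLin M))
        (EuclideanSpace.single j (1 : ℂ)) = Matrix.toEuclideanLin M
        (EuclideanSpace.single j (1 : ℂ)) from rfl, Matrix.toEuclideanLin_apply]
    rfl
  rw [happ] at h
  have hn : ‖(WithLp.equiv 2 (n → ℂ)).symm (Matrix.mulVec M (Pi.single j 1))‖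
      = Real.sqrt (∑ i, ‖M i j‖ ^ 2) := by
    rw [EuclideanSpace.norm_eq]
    congr 1
    refine Finset.sum_congr rfl fun i _ => ?_
    congr 1
    simp [Matrix.mulVec_single]
  rw [hn] at h
  have := Real.sqrt_le_sqrt (h := h)
  calc ∑ i, ‖M i j‖ ^ 2
      = Real.sqrt (∑ i, ‖M i j‖ ^ 2) ^ 2 := by
        rw [Real.sq_sqrt (Finset.sum_nonneg fun _ _ => sq_nonneg _)]
    _ ≤ opNorm M ^ 2 := by
        apply pow_le_pow_left₀ (Real.sqrt_nonneg _) h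

lemma frobSq_ptrans {d : ℕ} (O : Matrix (Fin d × Fin d) (Fin d × Fin d) ℂ) :
    frobSq (ptrans O) = frobSq O := by
  simp only [frobSq, ptrans, Matrix.of_apply]
  rw [← Finset.sum_product', ← Finset.sum_product']
  apply Finset.sum_nbij' (fun pq => ((pq.1.1, pq.2.2), (pq.2.1, pq.1.2)))
    (fun pq => ((pq.1.1, pq.2.2), (pq.2.1, pq.1.2))) <;> simp

/-- `‖O^{T2}‖_op ≤ d · ‖O‖_op`. -/
theorem opNorm_ptrans_le (d : ℕ) (hd : 0 < d)
    (O : Matrix (Fin d × Fin d) (Fin d × Fin d) ℂ) :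
    opNorm (ptrans O) ≤ (d : ℝ) * opNorm O := by
  have h1 : opNorm (ptrans O) ≤ Real.sqrt (frobSq (ptrans O)) := opNorm_le_sqrt_frobSq _
  rw [frobSq_ptrans] at h1
  have h2 : frobSq O ≤ (d : ℝ) ^ 2 * opNorm O ^ 2 := by
    have : frobSq O = ∑ j : Fin d × Fin d, ∑ i, ‖O i j‖ ^ 2 := Finset.sum_comm
    rw [this]
    calc ∑ j : Fin d × Fin d, ∑ i, ‖O i j‖ ^ 2
        ≤ ∑ _j : Fin d × Fin d, opNorm O ^ 2 :=
          Finset.sum_le_sum fun j _ => col_sq_le O j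
      _ = (d : ℝ) ^ 2 * opNorm O ^ 2 := by
          simp [Finset.sum_const, sq]
  have h3 : Real.sqrt (frobSq O) ≤ (d : ℝ) * opNorm O := by
    have hnn : (0 : ℝ) ≤ (d : ℝ) * opNorm O := by
      apply mul_nonneg (Nat.cast_nonneg d) (norm_nonneg _)
    rw [show ((d : ℝ) * opNorm O) = Real.sqrt (((d : ℝ) * opNorm O) ^ 2) from
      (Real.sqrt_sq hnn).symm]
    apply Real.sqrt_le_sqrt
    calc frobSq O ≤ (d : ℝ) ^ 2 * opNorm O ^ 2 := h2
      _ = ((d : ℝ) * opNorm O) ^ 2 := by ring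
  exact h1.trans h3
end

section
/- Let d ≥ 3 be an integer and x, y, x', y' ∈ Fin d. Then the uniform average over all d^d functions f : Fin d → Fin d of ω_d^{f(x)+f(y)−f(x')−f(y')} equals 1 if the multisets {x,y} and {x',y'} coincide (i.e., (x,y)=(x',y') or (x,y)=(y',x')), and equals 0 otherwise. -/
open Finset

private lemma zpow_sum' {ι : Type*} {a : ℂ} (ha : a ≠ 0) (s : Finset ι) (g : ι → ℤ) :
    a ^ (∑ i ∈ s, g i) = ∏ i ∈ s, a ^ g i := by
  induction s using Finset.cons_induction with
  | empty => simp
  | cons i s hi ih => simp [Finset.sum_cons, Finset.prod_cons, zpow_add₀ ha, ih]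

/-- the uniform average over all `d^d` functions `f : Fin d → Fin d` of
`ω_d^{f(x)+f(y)−f(x')−f(y')}` equals 1 if the multisets `{x,y}` and `{x',y'}` coincide,
and 0 otherwise. Here `ω_d = exp(2πi/d)`. -/
theorem average_phase_function (d : ℕ) (hd : 3 ≤ d) (x y x' y' : Fin d) :
    (1 / (d : ℂ) ^ (d : ℕ)) * ∑ f : Fin d → Fin d,
      Complex.exp (2 * Real.pi * Complex.I / d) ^
        (((f x : ℕ) : ℤ) + ((f y : ℕ) : ℤ) - ((f x' : ℕ) : ℤ) - ((f y' : ℕ) : ℤ)) =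
      if (x = x' ∧ y = y') ∨ (x = y' ∧ y = x') then 1 else 0 := by
  have hd0 : d ≠ 0 := by omega
  set ω : ℂ := Complex.exp (2 * Real.pi * Complex.I / d) with hωdef
  have hω : IsPrimitiveRoot ω d := Complex.isPrimitiveRoot_exp d hd0
  have hω0 : ω ≠ 0 := Complex.exp_ne_zero _
  set c : Fin d → ℤ := fun z =>
    (if z = x then 1 else 0) + (if z = y then 1 else 0)
      - (if z = x' then 1 else 0) - (if z = y' then 1 else 0) with hc
  -- rewrite exponent
  have hexp : ∀ f : Fin d → Fin d,
      (((f x : ℕ) : ℤ) + ((f y : ℕ) : ℤ) - ((f x' : ℕ) : ℤ) - ((f y' : ℕ) : ℤ))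
        = ∑ z, c z * (f z : ℤ) := by
    intro f
    simp only [hc, add_mul, sub_mul, ite_mul, one_mul, zero_mul,
      Finset.sum_add_distrib, Finset.sum_sub_distrib, Finset.sum_ite_eq',
      Finset.mem_univ, if_pos]
  -- inner sum value
  have hinner : ∀ z : Fin d, (∑ k : Fin d, (ω ^ c z) ^ (k : ℕ))
      = if c z = 0 then (d : ℂ) else 0 := by
    intro z
    by_cases h : c z = 0
    · simp [h]
    · rw [if_neg h]
      have hne1 : ω ^ c z ≠ 1 := by
        intro h1
        have := (hω.zpow_eq_one_iff_dvd (c z)).mp h1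
        have hb : |c z| < (d : ℤ) := by
          have : -2 ≤ c z ∧ c z ≤ 2 := by
            constructor <;> · simp only [hc]; split_ifs <;> omega
          rw [abs_lt]; omega
        exact h (Int.eq_zero_of_abs_lt_dvd this hb)
      rw [Fin.sum_univ_eq_sum_range (fun k => (ω ^ c z) ^ k), geom_sum_eq hne1]
      have : (ω ^ c z) ^ d = 1 := by
        rw [← zpow_natCast, ← zpow_mul, mul_comm, zpow_mul, zpow_natCast, hω.pow_eq_one,
          one_zpow]
      rw [this, sub_self, zero_div]
  -- factorize the sum
  have hfact : (∑ f : Fin d → Fin d,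
      ω ^ (((f x : ℕ) : ℤ) + ((f y : ℕ) : ℤ) - ((f x' : ℕ) : ℤ) - ((f y' : ℕ) : ℤ)))
      = ∏ z : Fin d, (if c z = 0 then (d : ℂ) else 0) := by
    have : ∀ f : Fin d → Fin d,
        ω ^ (((f x : ℕ) : ℤ) + ((f y : ℕ) : ℤ) - ((f x' : ℕ) : ℤ) - ((f y' : ℕ) : ℤ))
        = ∏ z : Fin d, (ω ^ c z) ^ ((f z : ℕ)) := by
      intro f
      rw [hexp f, zpow_sum' hω0]
      exact Finset.prod_congr rfl fun z _ => by rw [← zpow_natCast (ω ^ c z), ← zpow_mul]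
    rw [Finset.sum_congr rfl fun f _ => this f, ← Fintype.piFinset_univ,
      ← Finset.prod_univ_sum (fun _ => (Finset.univ : Finset (Fin d)))
        (fun z k => (ω ^ c z) ^ (k : ℕ))]
    exact Finset.prod_congr rfl fun z _ => hinner z
  rw [hfact]
  by_cases hcase : (x = x' ∧ y = y') ∨ (x = y' ∧ y = x')
  · have hall : ∀ z, c z = 0 := by
      intro z
      rcases hcase with ⟨h1, h2⟩ | ⟨h1, h2⟩ <;> subst h1 <;> subst h2 <;>
        · simp only [hc]; split_ifs <;> omega
    rw [if_pos hcase]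
    have : ∏ z : Fin d, (if c z = 0 then (d : ℂ) else 0) = (d : ℂ) ^ d := by
      rw [Finset.prod_congr rfl fun z _ => if_pos (hall z)]
      simp
    rw [this, one_div, inv_mul_cancel₀]
    exact pow_ne_zero d (Nat.cast_ne_zero.mpr hd0)
  · rw [if_neg hcase]
    have hex : ∃ z, c z ≠ 0 := by
      by_contra hno
      push_neg at hno
      have hx := hno x
      have hy := hno y
      apply hcase
      simp only [hc, Fin.ext_iff] at hx hy ⊢
      split_ifs at hx hy <;> omega
    obtain ⟨z, hz⟩ := hex
    have hzero : (∏ z : Fin d, if c z = 0 then (d : ℂ) else 0) = 0 :=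
      Finset.prod_eq_zero (Finset.mem_univ z) (if_neg hz)
    rw [hzero, mul_zero]
end

section
/- Let d ≥ 3 be an integer. Then E_f[(Z_f H_d)^{⊗2} · Π^eq · ((Z_f H_d)^{⊗2})†] = (1/d) · (I + F − Π^eq). -/
open Matrix
open scoped Kronecker

/-- `Π^eq = Σ_x |x,x⟩⟨x,x|`. -/
noncomputable def PiEq (d : ℕ) : Matrix (Fin d × Fin d) (Fin d × Fin d) ℂ :=
  Matrix.of fun p q => if p.1 = p.2 ∧ q.1 = q.2 ∧ p.1 = q.1 then 1 else 0

/-- The swap operator `F|x,y⟩ = |y,x⟩`. -/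
noncomputable def SwapF (d : ℕ) : Matrix (Fin d × Fin d) (Fin d × Fin d) ℂ :=
  Matrix.of fun p q => if p.1 = q.2 ∧ p.2 = q.1 then 1 else 0

/-- `ω_d = exp(2πi/d)`. -/
noncomputable def omegaC (d : ℕ) : ℂ := Complex.exp (2 * Real.pi * Complex.I / d)

/-- The diagonal phase matrix `Z_f` with `(Z_f)_{x,x} = ω_d^{f(x)}`. -/
noncomputable def Zmat (d : ℕ) (f : Fin d → Fin d) : Matrix (Fin d) (Fin d) ℂ :=
  Matrix.diagonal fun x => omegaC d ^ (f x : ℕ)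

/-- The discrete Fourier transform matrix, `(H_d)_{y,x} = ω_d^{x·y}/√d`. -/
noncomputable def Hmat (d : ℕ) : Matrix (Fin d) (Fin d) ℂ :=
  Matrix.of fun y x => omegaC d ^ ((x : ℕ) * (y : ℕ)) / (Real.sqrt d : ℂ)

namespace TwirlAux

lemma omega_prim {d : ℕ} (hd : d ≠ 0) : IsPrimitiveRoot (omegaC d) d := by
  simpa [omegaC] using Complex.isPrimitiveRoot_exp d hd

lemma omega_ne_zero {d : ℕ} : omegaC d ≠ 0 := Complex.exp_ne_zero _

lemma conj_omega {d : ℕ} : (starRingEnd ℂ) (omegaC d) = (omegaC d)⁻¹ := by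
  rw [omegaC, ← Complex.exp_conj, ← Complex.exp_neg]
  congr 1
  rw [map_div₀, _root_.map_mul, _root_.map_mul, Complex.conj_I, Complex.conj_natCast,
    Complex.conj_ofReal, map_ofNat]
  ring_nf

lemma conj_omega_pow {d : ℕ} (n : ℕ) :
    (starRingEnd ℂ) (omegaC d ^ n) = omegaC d ^ (-(n:ℤ)) := by
  rw [map_pow, conj_omega, _root_.zpow_neg, zpow_natCast, inv_pow]

lemma geom {d : ℕ} (hd : d ≠ 0) (c : ℤ) :
    ∑ a : Fin d, omegaC d ^ (c * (a : ℕ)) = if (d:ℤ) ∣ c then (d:ℂ) else 0 := by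
  have h1 : ∀ a : Fin d, omegaC d ^ (c * (a:ℕ)) = (omegaC d ^ c) ^ (a:ℕ) := by
    intro a
    rw [← zpow_natCast (omegaC d ^ c), ← _root_.zpow_mul]
  simp_rw [h1]
  rw [Fin.sum_univ_eq_sum_range (fun k => (omegaC d ^ c) ^ k) d]
  have hiff := (omega_prim hd).zpow_eq_one_iff_dvd c
  by_cases h : omegaC d ^ c = 1
  · rw [if_pos (hiff.mp h)]
    simp [h]
  · rw [geom_sum_eq h]
    have hzd : (omegaC d ^ c) ^ d = 1 := by
      rw [← zpow_natCast (omegaC d ^ c), ← _root_.zpow_mul, mul_comm, _root_.zpow_mul,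
        zpow_natCast, (omega_prim hd).pow_eq_one, _root_.one_zpow]
    rw [hzd, sub_self, zero_div, if_neg (fun hc => h (hiff.mpr hc))]

lemma zpow_sum' {α : Type*} (z : ℂ) (hz : z ≠ 0) (s : Finset α) (e : α → ℤ) :
    z ^ (∑ i ∈ s, e i) = ∏ i ∈ s, z ^ e i := by
  induction s using Finset.cons_induction with
  | empty => simp
  | cons a s ha ih => rw [Finset.sum_cons, Finset.prod_cons, zpow_add₀ hz, ih]

lemma Amat_apply (d : ℕ) (f : Fin d → Fin d) (x a : Fin d) :
    (Zmat d f * Hmat d) x a = omegaC d ^ ((f x : ℕ) + (a : ℕ) * (x : ℕ)) / (Real.sqrt d : ℂ) := by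
  simp [Zmat, Hmat, Matrix.diagonal_mul, pow_add, mul_div_assoc]

lemma tri_apply (d : ℕ) (A : Matrix (Fin d) (Fin d) ℂ) (x1 x2 y1 y2 : Fin d) :
    ((A ⊗ₖ A) * PiEq d * (A ⊗ₖ A)ᴴ) (x1, x2) (y1, y2)
      = ∑ a : Fin d, A x1 a * A x2 a *
          (starRingEnd ℂ) (A y1 a) * (starRingEnd ℂ) (A y2 a) := by
  rw [Matrix.mul_apply]
  simp_rw [Matrix.mul_apply, Matrix.conjTranspose_apply, Matrix.kroneckerMap_apply, PiEq,
    Matrix.of_apply]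
  rw [Fintype.sum_prod_type]
  simp [Fintype.sum_prod_type, ite_and, mul_ite, ite_mul, mul_zero, zero_mul, mul_one,
    Finset.sum_ite_eq, Finset.sum_ite_eq', Finset.mul_sum, Finset.sum_mul]
  exact Finset.sum_congr rfl fun a _ => by ring

lemma entry (d : ℕ) (_hd : d ≠ 0) (f : Fin d → Fin d) (x1 x2 y1 y2 : Fin d) :
    (∑ a : Fin d, (Zmat d f * Hmat d) x1 a * (Zmat d f * Hmat d) x2 a *
        (starRingEnd ℂ) ((Zmat d f * Hmat d) y1 a) *
        (starRingEnd ℂ) ((Zmat d f * Hmat d) y2 a))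
      = 1 / (d:ℂ)^2 *
          omegaC d ^ (((f x1 : ℕ) : ℤ) + ((f x2 : ℕ) : ℤ) - ((f y1 : ℕ) : ℤ) - ((f y2 : ℕ) : ℤ)) *
          ∑ a : Fin d,
            omegaC d ^ ((((x1:ℕ):ℤ) + ((x2:ℕ):ℤ) - ((y1:ℕ):ℤ) - ((y2:ℕ):ℤ)) * (a : ℕ)) := by
  rw [Finset.mul_sum]
  refine Finset.sum_congr rfl fun a _ => ?_
  rw [Amat_apply, Amat_apply, Amat_apply, Amat_apply, map_div₀, map_div₀, conj_omega_pow,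
    conj_omega_pow, Complex.conj_ofReal]
  have hss : (Real.sqrt d : ℂ) * (Real.sqrt d : ℂ) = (d : ℂ) := by
    rw [← Complex.ofReal_mul, Real.mul_self_sqrt (Nat.cast_nonneg d)]
    norm_cast
  set ω := omegaC d with hω
  have hω0 : ω ≠ 0 := omega_ne_zero
  set E1 : ℤ := ((f x1 : ℕ) : ℤ) + ((f x2 : ℕ) : ℤ) - ((f y1 : ℕ) : ℤ) - ((f y2 : ℕ) : ℤ)
  set Δ : ℤ := ((x1:ℕ):ℤ) + ((x2:ℕ):ℤ) - ((y1:ℕ):ℤ) - ((y2:ℕ):ℤ)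
  have hnum : ω ^ ((f x1 : ℕ) + (a:ℕ) * (x1:ℕ)) * ω ^ ((f x2 : ℕ) + (a:ℕ) * (x2:ℕ)) *
      ω ^ (-(((f y1 : ℕ) + (a:ℕ) * (y1:ℕ) : ℕ) : ℤ)) *
      ω ^ (-(((f y2 : ℕ) + (a:ℕ) * (y2:ℕ) : ℕ) : ℤ)) = ω ^ E1 * ω ^ (Δ * (a:ℕ)) := by
    rw [← zpow_natCast ω ((f x1 : ℕ) + (a:ℕ) * (x1:ℕ)), ← zpow_natCast ω ((f x2 : ℕ) + (a:ℕ) * (x2:ℕ)),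
      ← zpow_add₀ hω0, ← zpow_add₀ hω0, ← zpow_add₀ hω0, ← zpow_add₀ hω0]
    congr 1
    push_cast
    ring
  calc ω ^ ((f x1 : ℕ) + (a:ℕ) * (x1:ℕ)) / (Real.sqrt d : ℂ) *
        (ω ^ ((f x2 : ℕ) + (a:ℕ) * (x2:ℕ)) / (Real.sqrt d : ℂ)) *
        (ω ^ (-(((f y1 : ℕ) + (a:ℕ) * (y1:ℕ) : ℕ) : ℤ)) / (Real.sqrt d : ℂ)) *
        (ω ^ (-(((f y2 : ℕ) + (a:ℕ) * (y2:ℕ) : ℕ) : ℤ)) / (Real.sqrt d : ℂ))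
      = (ω ^ ((f x1 : ℕ) + (a:ℕ) * (x1:ℕ)) * ω ^ ((f x2 : ℕ) + (a:ℕ) * (x2:ℕ)) *
          ω ^ (-(((f y1 : ℕ) + (a:ℕ) * (y1:ℕ) : ℕ) : ℤ)) *
          ω ^ (-(((f y2 : ℕ) + (a:ℕ) * (y2:ℕ) : ℕ) : ℤ))) /
          (((Real.sqrt d : ℂ) * (Real.sqrt d : ℂ)) * ((Real.sqrt d : ℂ) * (Real.sqrt d : ℂ))) := by
        ring
    _ = (ω ^ E1 * ω ^ (Δ * (a:ℕ))) / ((d:ℂ) * (d:ℂ)) := by rw [hnum, hss]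
    _ = 1 / (d:ℂ)^2 * ω ^ E1 * ω ^ (Δ * (a:ℕ)) := by ring

lemma Tsum_eq_zero (d : ℕ) (hd3 : 3 ≤ d) (x1 x2 y1 y2 : Fin d)
    (h1 : ¬(x1 = y1 ∧ x2 = y2)) (h2 : ¬(x1 = y2 ∧ x2 = y1)) :
    ∑ f : Fin d → Fin d,
      omegaC d ^ (((f x1 : ℕ) : ℤ) + ((f x2 : ℕ) : ℤ) - ((f y1 : ℕ) : ℤ) - ((f y2 : ℕ) : ℤ)) = 0 := by
  have hd : d ≠ 0 := by omega
  set c : Fin d → ℤ := fun z => (if z = x1 then 1 else 0) + (if z = x2 then 1 else 0)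
    - (if z = y1 then 1 else 0) - (if z = y2 then 1 else 0) with hc
  have hsum : ∀ f : Fin d → Fin d,
      (((f x1 : ℕ) : ℤ) + ((f x2 : ℕ) : ℤ) - ((f y1 : ℕ) : ℤ) - ((f y2 : ℕ) : ℤ))
        = ∑ z, c z * ((f z : ℕ) : ℤ) := by
    intro f
    have hz : ∀ z : Fin d, c z * ((f z : ℕ) : ℤ)
        = (if z = x1 then ((f z : ℕ) : ℤ) else 0) + (if z = x2 then ((f z : ℕ) : ℤ) else 0)
          - (if z = y1 then ((f z : ℕ) : ℤ) else 0) - (if z = y2 then ((f z : ℕ) : ℤ) else 0) := by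
      intro z
      simp only [hc]
      split_ifs <;> ring
    simp_rw [hz]
    rw [Finset.sum_sub_distrib, Finset.sum_sub_distrib, Finset.sum_add_distrib]
    simp [Finset.sum_ite_eq']
  simp_rw [hsum, zpow_sum' _ omega_ne_zero]
  rw [← Fintype.prod_sum (fun z k => omegaC d ^ (c z * ((k : Fin d) : ℕ)))]
  obtain ⟨z0, hz0⟩ : ∃ z0, c z0 = 1 ∨ c z0 = 2 := by
    by_cases ha : x1 = y1
    · have hne : x2 ≠ y2 := fun h => h1 ⟨ha, h⟩
      refine ⟨x2, Or.inl ?_⟩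
      simp only [hc]
      rw [if_true, if_neg hne, ← ha]
      split_ifs <;> ring
    · by_cases hb : x1 = y2
      · have hne : x2 ≠ y1 := fun h => h2 ⟨hb, h⟩
        refine ⟨x2, Or.inl ?_⟩
        simp only [hc]
        rw [if_true, if_neg hne, ← hb]
        split_ifs <;> ring
      · refine ⟨x1, ?_⟩
        simp only [hc]
        rw [if_true, if_neg ha, if_neg hb]
        by_cases hcc : x1 = x2
        · rw [if_pos hcc]; right; ring
        · rw [if_neg hcc]; left; ring
  refine Finset.prod_eq_zero (Finset.mem_univ z0) ?_
  rw [geom hd, if_neg]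
  intro hdvd
  have hle := Int.le_of_dvd (by rcases hz0 with h | h <;> omega) hdvd
  rcases hz0 with h | h <;> omega

end TwirlAux

/-- `E_f[(Z_f H_d)^{⊗2} · Π^eq · ((Z_f H_d)^{⊗2})†] = (1/d)(I + F − Π^eq)`,
where `E_f` is the uniform average over all `d^d` functions `f : Fin d → Fin d`. -/
theorem twirl_ZH_PiEq (d : ℕ) (hd : 3 ≤ d) :
    ((1 : ℂ) / (d : ℂ) ^ (d : ℕ)) • ∑ f : Fin d → Fin d,
        ((Zmat d f * Hmat d) ⊗ₖ (Zmat d f * Hmat d)) * PiEq d *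
          ((Zmat d f * Hmat d) ⊗ₖ (Zmat d f * Hmat d))ᴴ
      = ((1 : ℂ) / (d : ℂ)) •
          ((1 : Matrix (Fin d × Fin d) (Fin d × Fin d) ℂ) + SwapF d - PiEq d) := by
  have hd0 : d ≠ 0 := by omega
  have hdC : (d:ℂ) ≠ 0 := Nat.cast_ne_zero.mpr hd0
  ext ⟨x1, x2⟩ ⟨y1, y2⟩
  rw [Matrix.smul_apply, Matrix.sum_apply]
  simp_rw [TwirlAux.tri_apply, TwirlAux.entry d hd0]
  rw [← Finset.sum_mul, ← Finset.mul_sum]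
  rw [Matrix.smul_apply, Matrix.sub_apply, Matrix.add_apply, Matrix.one_apply]
  simp only [SwapF, PiEq, Matrix.of_apply, smul_eq_mul, Prod.mk.injEq]
  by_cases h1 : x1 = y1 ∧ x2 = y2
  · obtain ⟨ha, hb⟩ := h1
    subst ha; subst hb
    have he : ∀ f : Fin d → Fin d,
        ((f x1 : ℕ) : ℤ) + ((f x2 : ℕ) : ℤ) - ((f x1 : ℕ) : ℤ) - ((f x2 : ℕ) : ℤ) = 0 :=
      fun f => by ring
    have he2 : ∀ a : Fin d,
        ((((x1:ℕ):ℤ) + ((x2:ℕ):ℤ) - ((x1:ℕ):ℤ) - ((x2:ℕ):ℤ)) * (a : ℕ)) = 0 :=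
      fun a => by ring
    simp_rw [he, he2, zpow_zero]
    rw [Finset.sum_const, Finset.sum_const, Finset.card_univ, Finset.card_univ]
    simp only [Fintype.card_fun, Fintype.card_fin, nsmul_eq_mul, mul_one, Nat.cast_pow]
    by_cases hx : x1 = x2
    · simp only [hx, and_self, if_true, eq_self_iff_true]
      field_simp
      ring
    · simp only [and_self, if_true, eq_self_iff_true, hx, if_false, and_false, false_and,
        if_neg (fun h : x1 = x2 ∧ x2 = x1 => hx h.1), if_neg (fun h : x1 = x2 ∧ _ => hx h.1)]
      field_simp
      ring
  · by_cases h2 : x1 = y2 ∧ x2 = y1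
    · obtain ⟨ha, hb⟩ := h2
      subst ha; subst hb
      have hx : x1 ≠ x2 := fun h => h1 ⟨h, h.symm⟩
      have he : ∀ f : Fin d → Fin d,
          ((f x1 : ℕ) : ℤ) + ((f x2 : ℕ) : ℤ) - ((f x2 : ℕ) : ℤ) - ((f x1 : ℕ) : ℤ) = 0 :=
        fun f => by ring
      have he2 : ∀ a : Fin d,
          ((((x1:ℕ):ℤ) + ((x2:ℕ):ℤ) - ((x2:ℕ):ℤ) - ((x1:ℕ):ℤ)) * (a : ℕ)) = 0 :=
        fun a => by ring
      simp_rw [he, he2, zpow_zero]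
      rw [Finset.sum_const, Finset.sum_const, Finset.card_univ, Finset.card_univ]
      simp only [Fintype.card_fun, Fintype.card_fin, nsmul_eq_mul, mul_one, Nat.cast_pow]
      simp only [hx, Ne.symm hx, if_false, and_false, false_and, and_self, if_true,
        eq_self_iff_true, and_true, true_and]
      field_simp
      ring
    · rw [TwirlAux.Tsum_eq_zero d hd x1 x2 y1 y2 h1 h2]
      have hpi : ¬(x1 = x2 ∧ y1 = y2 ∧ x1 = y1) :=
        fun h => h1 ⟨h.2.2, by rw [← h.1, h.2.2, h.2.1]⟩
      simp [h1, h2, hpi]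
end

section
/- Let d, t, ℓ, r be real numbers with 1 ≤ t ≤ d/2, ℓ ≥ 0, r ≥ 0, and ℓ + r ≤ t. Then (d/(d − ℓ − r + 1)) · ((3ℓ + 2r)/(d+1) + 2r·√((ℓ + r)/d)) ≤ 6t·√(t/d). -/
/-- for real `d, t, ℓ, r` with `1 ≤ t ≤ d/2`, `ℓ, r ≥ 0`, `ℓ + r ≤ t`,
`(d/(d − ℓ − r + 1)) · ((3ℓ + 2r)/(d+1) + 2r·√((ℓ + r)/d)) ≤ 6t·√(t/d)`. -/
theorem pru_parameter_bound (d t l r : ℝ)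
    (ht1 : 1 ≤ t) (htd : t ≤ d / 2) (hl : 0 ≤ l) (hr : 0 ≤ r) (hlr : l + r ≤ t) :
    (d / (d - l - r + 1)) * ((3 * l + 2 * r) / (d + 1) + 2 * r * Real.sqrt ((l + r) / d)) ≤
      6 * t * Real.sqrt (t / d) := by
  have hd0 : (0:ℝ) < d := by linarith
  have hd1 : (0:ℝ) < d + 1 := by linarith
  have hd2 : (0:ℝ) < d + 2 := by linarith
  set x := Real.sqrt (t / d) with hx
  have hx0 : 0 ≤ x := Real.sqrt_nonneg _
  have hx2 : x ^ 2 = t / d := Real.sq_sqrt (by positivity)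
  have hy0 : 0 ≤ Real.sqrt ((l + r) / d) := Real.sqrt_nonneg _
  have hy : Real.sqrt ((l + r) / d) ≤ x := by
    apply Real.sqrt_le_sqrt
    gcongr
  have hden : (0:ℝ) < d - l - r + 1 := by linarith
  -- Step A: bound each factor
  have hA : (d / (d - l - r + 1)) * ((3 * l + 2 * r) / (d + 1) + 2 * r * Real.sqrt ((l + r) / d))
      ≤ (2 * d / (d + 2)) * (3 * t / (d + 1) + 2 * t * x) := by
    apply mul_le_mul
    · rw [div_le_div_iff₀ hden hd2]
      nlinarith
    · have h1 : (3 * l + 2 * r) / (d + 1) ≤ 3 * t / (d + 1) := by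
        gcongr
        linarith
      have h2 : 2 * r * Real.sqrt ((l + r) / d) ≤ 2 * t * x := by
        apply mul_le_mul (by linarith) hy hy0 (by linarith)
      linarith
    · positivity
    · positivity
  -- lower bound on x : x * sqrt d ≥ 1
  set u := Real.sqrt d with hu
  have hu0 : 0 < u := Real.sqrt_pos.mpr hd0
  have hu2 : u ^ 2 = d := Real.sq_sqrt hd0.le
  have hxu : 1 ≤ x * u := by
    have hsq : (x * u) ^ 2 = t := by
      rw [mul_pow, hx2, hu2]
      field_simp
    nlinarith [mul_nonneg hx0 hu0.le]
  -- Step C: 3d ≤ x (d+1)(d+6)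
  have hC : 3 * d ≤ x * ((d + 1) * (d + 6)) := by
    have h3 : 3 * d * u ≤ (d + 1) * (d + 6) := by
      nlinarith [sq_nonneg (u ^ 2 - (3 / 2) * u), sq_nonneg u]
    nlinarith [mul_le_mul_of_nonneg_left h3 hx0, mul_le_mul_of_nonneg_left hxu (by linarith : (0:ℝ) ≤ 3 * d)]
  -- Step B
  have key : 2 * d * (3 * t + 2 * t * x * (d + 1)) ≤ 6 * t * x * ((d + 2) * (d + 1)) := by
    nlinarith [mul_le_mul_of_nonneg_left hC (by linarith : (0:ℝ) ≤ 2 * t)]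
  have hB : (2 * d / (d + 2)) * (3 * t / (d + 1) + 2 * t * x) ≤ 6 * t * x := by
    have e : (2 * d / (d + 2)) * (3 * t / (d + 1) + 2 * t * x)
        = (2 * d * (3 * t + 2 * t * x * (d + 1))) / ((d + 2) * (d + 1)) := by
      field_simp
    rw [e, div_le_iff₀ (by positivity)]
    nlinarith [key]
  linarith
end

section
/- Let V be an n×n complex unitary matrix and Π an n×n orthogonal projection (Π² = Π and Π† = Π) such that ‖VΠ − Π‖_op ≤ δ for some real δ with 0 ≤ δ < 1/2. Then there exists an n×n complex unitary matrix W such that WΠ = Π and ‖V − W‖_op ≤ 7δ. -/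
open scoped Matrix.Norms.L2Operator Pointwise

noncomputable instance matCSA (n : ℕ) : CStarAlgebra (Matrix (Fin n) (Fin n) ℂ) :=
  { Matrix.instL2OpNormedRing, Matrix.instL2OpNormedAlgebra,
    (inferInstance : StarRing _), FiniteDimensional.complete ℂ _,
    Matrix.instCStarRing, (inferInstance : StarModule ℂ _) with }

lemma commute_aeval {R A : Type*} [CommSemiring R] [Semiring A] [Algebra R A]
    {a b : A} (hb : Commute b a) (q : Polynomial R) : Commute b (Polynomial.aeval a q) := by
  have halg : ∀ r : R, Commute b (algebraMap R A r) := fun r => (Algebra.commutes r b).symm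
  induction q using Polynomial.induction_on with
  | C r => simpa using halg r
  | add p q hp hq => simpa only [map_add] using hp.add_right hq
  | monomial m r hm =>
      simp only [map_mul, Polynomial.aeval_C, map_pow, Polynomial.aeval_X]
      exact (halg r).mul_right (hb.pow_right (m + 1))

lemma commute_cfc {A : Type*} [CStarAlgebra A] {a b : A} (hb : Commute b a) (f : ℝ → ℝ) :
    Commute b (cfc f a) := by
  refine cfc_cases (fun x => Commute b x) a f (Commute.zero_right b) fun hf ha' => ?_
  set σ := spectrum ℝ a
  have hcl : closure ((polynomialFunctions σ : Subalgebra ℝ C(σ, ℝ)) : Set C(σ, ℝ)) =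
      Set.univ := by
    rw [← Subalgebra.topologicalClosure_coe, polynomialFunctions.topologicalClosure]
    rfl
  have hmemcl : (⟨_, hf.restrict⟩ : C(σ, ℝ)) ∈
      closure ((polynomialFunctions σ : Subalgebra ℝ C(σ, ℝ)) : Set C(σ, ℝ)) := by
    rw [hcl]; trivial
  have hmaps : Set.MapsTo (cfcHom ha' (R := ℝ))
      ((polynomialFunctions σ : Subalgebra ℝ C(σ, ℝ)) : Set C(σ, ℝ))
      {x : A | b * x = x * b} := by
    intro g hg
    rw [polynomialFunctions_coe] at hg
    obtain ⟨q, rfl⟩ := hg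
    set ψ : Polynomial ℝ →ₐ[ℝ] A :=
      ((cfcHom ha' (R := ℝ)).toAlgHom.comp (Polynomial.toContinuousMapOnAlgHom σ)) with hψ
    show b * ψ q = ψ q * b
    have hX : ψ Polynomial.X = a := by
      simp only [ψ, AlgHom.comp_apply, Polynomial.toContinuousMapOnAlgHom_apply,
        Polynomial.toContinuousMapOn_X_eq_restrict_id]
      exact cfcHom_id ha'
    have haev : ψ q = Polynomial.aeval a q := by
      rw [← hX, Polynomial.aeval_algHom_apply, Polynomial.aeval_X_left_apply]
    rw [haev]
    exact commute_aeval hb q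
  have hmem := map_mem_closure (cfcHom_isClosedEmbedding ha' (R := ℝ)).continuous hmemcl hmaps
  have h2 := (isClosed_eq (by fun_prop) (by fun_prop) :
      IsClosed {x : A | b * x = x * b}).closure_eq
  rw [h2] at hmem
  exact hmem

lemma real_ineq' {x : ℝ} (hx : 3/4 ≤ x) : |1 - (Real.sqrt x)⁻¹| ≤ |1 - x| := by
  have hx0 : (0:ℝ) ≤ x := by linarith
  set r := Real.sqrt x with hr
  have hrr : r * r = x := Real.mul_self_sqrt hx0
  have hrpos : 0 < r := Real.sqrt_pos.mpr (by linarith)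
  have hr12 : (1:ℝ)/2 ≤ r := by nlinarith
  have hinv : r * r⁻¹ = 1 := mul_inv_cancel₀ hrpos.ne'
  rcases le_or_gt 1 x with h | h
  · have hr1 : 1 ≤ r := by nlinarith
    have hi1 : r⁻¹ ≤ 1 := by
      rw [inv_le_one_iff₀]; right; exact hr1
    rw [abs_of_nonneg (by linarith), abs_of_nonpos (by linarith)]
    have : (0:ℝ) ≤ r - 1 := by linarith
    nlinarith [mul_pos hrpos hrpos]
  · have hr1 : r ≤ 1 := by nlinarith
    have hi1 : 1 ≤ r⁻¹ := by
      rw [le_inv_comm₀] <;> nlinarith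
    rw [abs_of_nonpos (by linarith), abs_of_nonneg (by linarith)]
    nlinarith

lemma key {M : Type*} [CStarAlgebra M] [Nontrivial M] (a p : M)
    (ha : star a * a = 1) (ha' : a * star a = 1)
    (hp2 : p * p = p) (hpsa : star p = p)
    (δ : ℝ) (hδ0 : 0 ≤ δ) (hδ : δ < 1/2) (hclose : ‖a * p - p‖ ≤ δ) :
    ∃ W : M, star W * W = 1 ∧ W * p = p ∧ ‖a - W‖ ≤ 7 * δ := by
  have unit_mul : ∀ (u y : M), star u * u = 1 → ‖u * y‖ = ‖y‖ := by
    intro u y hu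
    have h1 : ‖u * y‖ * ‖u * y‖ = ‖y‖ * ‖y‖ := by
      rw [← CStarRing.norm_star_mul_self (x := u * y), ← CStarRing.norm_star_mul_self (x := y)]
      congr 1
      rw [star_mul]
      calc star y * star u * (u * y) = star y * (star u * u) * y := by noncomm_ring
        _ = star y * y := by rw [hu]; noncomm_ring
    nlinarith [norm_nonneg (u * y), norm_nonneg y]
  set q : M := 1 - p with hq
  have hpq : p * q = 0 := by rw [hq, mul_sub, mul_one, hp2, sub_self]
  have hqp : q * p = 0 := by rw [hq, sub_mul, one_mul, hp2, sub_self]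
  have hq2 : q * q = q := by
    rw [hq, sub_mul, one_mul, mul_sub, mul_one, hp2]; abel
  have hqsa : star q = q := by rw [hq, star_sub, star_one, hpsa]
  set c : M := q * a * q with hc
  set t : M := star c * c + p with ht
  have hcp : c * p = 0 := by rw [hc, mul_assoc, hqp, mul_zero]
  have hpc : p * c = 0 := by rw [hc, ← mul_assoc, ← mul_assoc, hpq, zero_mul, zero_mul]
  have hpcs : star c * p = 0 := by
    have h := congrArg star hpc
    rwa [star_mul, hpsa, star_zero] at h
  have hnorm1 : ‖(1 : M)‖ = 1 := norm_one
  have ha_norm : ‖a‖ = 1 := by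
    have h := CStarRing.norm_star_mul_self (x := a)
    rw [ha, hnorm1] at h
    nlinarith [norm_nonneg a]
  have proj_norm : ∀ x : M, x * x = x → star x = x → ‖x‖ ≤ 1 := by
    intro x hx2 hxsa
    have h := CStarRing.norm_star_mul_self (x := x)
    rw [hxsa, hx2] at h
    nlinarith [norm_nonneg x]
  have hq_norm : ‖q‖ ≤ 1 := proj_norm q hq2 hqsa
  have hc_norm : ‖c‖ ≤ 1 := by
    calc ‖q * a * q‖ ≤ ‖q * a‖ * ‖q‖ := norm_mul_le _ _
      _ ≤ ‖q‖ * ‖a‖ * ‖q‖ := by gcongr; exact norm_mul_le _ _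
      _ ≤ 1 := by rw [ha_norm]; nlinarith [norm_nonneg q]
  have hpa : ‖p * a - p‖ ≤ δ := by
    have e1 : star (star a * p - p) = p * a - p := by
      rw [star_sub, star_mul, star_star, hpsa]
    have e2 : star a * (p - a * p) = star a * p - p := by
      rw [mul_sub, ← mul_assoc, ha, one_mul]
    calc ‖p * a - p‖ = ‖star (star a * p - p)‖ := by rw [e1]
      _ = ‖star a * p - p‖ := norm_star _
      _ = ‖star a * (p - a * p)‖ := by rw [e2]
      _ = ‖p - a * p‖ := unit_mul _ _ (by rw [star_star, ha'])
      _ = ‖a * p - p‖ := norm_sub_rev _ _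
      _ ≤ δ := hclose
  have hpaq : ‖p * a * q‖ ≤ δ := by
    have e : (p * a - p) * q = p * a * q := by rw [sub_mul, hpq, sub_zero]
    calc ‖p * a * q‖ = ‖(p * a - p) * q‖ := by rw [e]
      _ ≤ ‖p * a - p‖ * ‖q‖ := norm_mul_le _ _
      _ ≤ δ := by nlinarith [norm_nonneg (p * a - p), norm_nonneg q]
  have h1t : (1 : M) - t = star (p * a * q) * (p * a * q) := by
    have e1 : star (p * a * q) * (p * a * q) = q * star a * p * a * q := by
      rw [star_mul, star_mul, hpsa, hqsa]
      calc q * (star a * p) * (p * a * q) = q * star a * (p * p) * a * q := by noncomm_ring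
        _ = q * star a * p * a * q := by rw [hp2]
    have e2 : star c * c = q * star a * q * a * q := by
      rw [hc, star_mul, star_mul, hqsa]
      calc q * (star a * q) * (q * a * q) = q * star a * (q * q) * a * q := by noncomm_ring
        _ = q * star a * q * a * q := by rw [hq2]
    rw [ht, e2, e1]
    have e3 : q * star a * (1 : M) * a * q = q := by
      calc q * star a * (1 : M) * a * q = q * (star a * a) * q := by noncomm_ring
        _ = q := by rw [ha, mul_one, hq2]
    have e4 : q * star a * p * a * q = q - q * star a * q * a * q := by
      have hp1q : p = 1 - q := by rw [hq]; abel
      rw [hp1q]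
      calc q * star a * ((1:M) - q) * a * q
          = q * star a * (1:M) * a * q - q * star a * q * a * q := by noncomm_ring
        _ = q - q * star a * q * a * q := by rw [e3]
    rw [e4, hq]
    abel
  have h1t_norm : ‖(1 : M) - t‖ ≤ δ ^ 2 := by
    rw [h1t, CStarRing.norm_star_mul_self]
    nlinarith [norm_nonneg (p * a * q)]
  have hδ2 : δ ^ 2 ≤ 1/4 := by nlinarith
  have ht_sa : IsSelfAdjoint t := by
    rw [IsSelfAdjoint, ht, star_add, star_mul, star_star, hpsa]
  have hspec : ∀ x ∈ spectrum ℝ t, |1 - x| ≤ δ ^ 2 := by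
    intro x hx
    have hmem : (1 : ℝ) - x ∈ spectrum ℝ ((1 : M) - t) := by
      have h : {(1:ℝ)} - spectrum ℝ t = spectrum ℝ ((algebraMap ℝ M 1) - t) :=
        spectrum.singleton_sub_eq t 1
      rw [map_one] at h
      rw [← h]
      exact Set.sub_mem_sub rfl hx
    have h := spectrum.norm_le_norm_of_mem hmem
    rw [Real.norm_eq_abs] at h
    linarith
  have hspec34 : ∀ x ∈ spectrum ℝ t, 3/4 ≤ x := by
    intro x hx
    have h := abs_le.mp (hspec x hx)
    linarith
  have htp : t * p = p := by
    rw [ht, add_mul, hp2, mul_assoc, hcp, mul_zero, zero_add]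
  have hpcs2 : p * star c = 0 := by
    have h := congrArg star hcp
    rwa [star_mul, hpsa, star_zero] at h
  have hpt : p * t = p := by
    rw [ht, mul_add, hp2, ← mul_assoc, hpcs2, zero_mul, zero_add]
  have hcomm_pt : Commute p t := by rw [Commute, SemiconjBy, hpt, htp]
  set f : ℝ → ℝ := fun x => (Real.sqrt x)⁻¹ with hf
  have hf_cont : ContinuousOn f (spectrum ℝ t) := by
    intro x hx
    have hx34 := hspec34 x hx
    exact (ContinuousAt.inv₀ Real.continuous_sqrt.continuousAt
      (Real.sqrt_pos.mpr (by linarith)).ne').continuousWithinAt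
  set s : M := cfc f t with hs
  have hs_sa : IsSelfAdjoint s := cfc_predicate f t
  have hcomm_ps : Commute p s := commute_cfc hcomm_pt f
  have hcomm_ts : Commute t s := commute_cfc (Commute.refl t) f
  have hsst : s * s * t = 1 := by
    have e1 : s * s = cfc (fun x => f x * f x) t := (cfc_mul f f t hf_cont hf_cont).symm
    have e2 : cfc (fun x => f x * f x) t * cfc (fun x : ℝ => x) t
        = cfc (fun x => (f x * f x) * x) t :=
      (cfc_mul _ _ t (hf_cont.mul hf_cont) continuous_id.continuousOn).symm
    rw [e1]
    nth_rewrite 2 [← cfc_id' ℝ t ht_sa]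
    rw [e2]
    have e3 : (spectrum ℝ t).EqOn (fun x => (f x * f x) * x) (fun _ => 1) := by
      intro x hx
      have hx34 := hspec34 x hx
      have hx0 : (0:ℝ) < x := by linarith
      simp only [hf]
      rw [← mul_inv, Real.mul_self_sqrt hx0.le]
      field_simp
    rw [cfc_congr e3, cfc_const_one ℝ t ht_sa]
  have hssp : s * s * p = p := by
    conv_lhs => rw [← htp, ← mul_assoc]
    rw [hsst, one_mul]
  set W : M := p + c * s with hW
  have hWsa : star W = p + s * star c := by
    rw [hW, star_add, star_mul, hpsa, hs_sa.star_eq]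
  have hWunit : star W * W = 1 := by
    rw [hWsa, hW]
    have e1 : (p + s * star c) * (p + c * s)
        = p * p + p * (c * s) + s * star c * p + s * (star c * c) * s := by noncomm_ring
    rw [e1, hp2, ← mul_assoc, hpc, zero_mul, add_zero, mul_assoc s (star c) p, hpcs, mul_zero,
      add_zero]
    have e2 : star c * c = t - p := by rw [ht]; abel
    rw [e2, mul_sub, sub_mul]
    have e3 : s * t * s = 1 := by
      rw [mul_assoc, hcomm_ts.eq, ← mul_assoc, hsst]
    have e4 : s * p * s = p := by
      rw [mul_assoc, hcomm_ps.eq, ← mul_assoc, hssp]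
    rw [e3, e4]
    abel
  have hWp : W * p = p := by
    rw [hW, add_mul, hp2, mul_assoc, ← hcomm_ps.eq, ← mul_assoc, hcp, zero_mul, add_zero]
  refine ⟨W, hWunit, hWp, ?_⟩
  have h1s : ‖(1 : M) - s‖ ≤ δ ^ 2 := by
    have e1 : (1 : M) - s = cfc (fun x => 1 - f x) t := by
      rw [cfc_sub (fun _ => (1:ℝ)) f t (by fun_prop) hf_cont, cfc_const_one ℝ t ht_sa]
    rw [e1]
    apply norm_cfc_le (sq_nonneg δ)
    intro x hx
    rw [Real.norm_eq_abs]
    calc |1 - f x| ≤ |1 - x| := real_ineq' (hspec34 x hx)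
      _ ≤ δ ^ 2 := hspec x hx
  have hdecomp : a - W = (a * p - p) + p * a * q + c * (1 - s) := by
    rw [hW, hc, hq]
    noncomm_ring
  have hcs : ‖c * (1 - s)‖ ≤ δ ^ 2 := by
    calc ‖c * (1 - s)‖ ≤ ‖c‖ * ‖(1:M) - s‖ := norm_mul_le _ _
      _ ≤ δ ^ 2 := by nlinarith [norm_nonneg c, norm_nonneg ((1:M) - s), sq_nonneg δ]
  calc ‖a - W‖ = ‖(a * p - p) + p * a * q + c * (1 - s)‖ := by rw [hdecomp]
    _ ≤ ‖(a * p - p) + p * a * q‖ + ‖c * (1 - s)‖ := norm_add_le _ _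
    _ ≤ ‖a * p - p‖ + ‖p * a * q‖ + ‖c * (1 - s)‖ := by gcongr; exact norm_add_le _ _
    _ ≤ δ + δ + δ ^ 2 := by gcongr
    _ ≤ 7 * δ := by nlinarith

open Matrix

/-- if `V` is unitary, `P` is an orthogonal projection, and `‖VP − P‖_op ≤ δ`
with `0 ≤ δ < 1/2`, then there is a unitary `W` with `WP = P` and `‖V − W‖_op ≤ 7δ`. -/
theorem close_to_subspace_fixing_unitary (n : ℕ)
    (V P : Matrix (Fin n) (Fin n) ℂ)
    (hV : V ∈ Matrix.unitaryGroup (Fin n) ℂ)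
    (hP2 : P * P = P) (hPsa : Pᴴ = P)
    (δ : ℝ) (hδ0 : 0 ≤ δ) (hδ : δ < 1 / 2)
    (hclose : opNorm (V * P - P) ≤ δ) :
    ∃ W : Matrix (Fin n) (Fin n) ℂ,
      W ∈ Matrix.unitaryGroup (Fin n) ℂ ∧ W * P = P ∧ opNorm (V - W) ≤ 7 * δ := by
  rcases Nat.eq_zero_or_pos n with hn | hn
  · subst hn
    haveI : Subsingleton (Matrix (Fin 0) (Fin 0) ℂ) :=
      ⟨fun A B => by ext i j; exact i.elim0⟩
    refine ⟨1, Submonoid.one_mem _, Subsingleton.elim _ _, ?_⟩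
    have h0 : V - 1 = 0 := Subsingleton.elim _ _
    rw [h0]
    have : opNorm (0 : Matrix (Fin 0) (Fin 0) ℂ) = 0 := by
      simp only [opNorm, map_zero, norm_zero]
    rw [this]
    linarith
  · haveI : NeZero n := ⟨hn.ne'⟩
    have hsVV : star V * V = 1 := Matrix.mem_unitaryGroup_iff'.mp hV
    have hVVs : V * star V = 1 := Matrix.mem_unitaryGroup_iff.mp hV
    have hPsa' : star P = P := hPsa
    have hclose' : ‖V * P - P‖ ≤ δ := hclose
    obtain ⟨W, hW1, hW2, hW3⟩ := key V P hsVV hVVs hP2 hPsa' δ hδ0 hδ hclose'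
    exact ⟨W, Matrix.mem_unitaryGroup_iff'.mpr hW1, hW2, hW3⟩
end

section
/- Let E be a finite-dimensional complex inner product space and let P, Q : E → E be orthogonal projections (self-adjoint idempotent linear maps). Then there exists a finite family (S_j) of pairwise orthogonal linear subspaces of E whose internal direct sum is all of E, such that each S_j is invariant under both P and Q, and each S_j has dimension at most 2. -/
open scoped InnerProductSpace
open Module

/-- Existence of a nonzero invariant subspace of dimension ≤ 2. -/
lemma exists_invariant_sub (E : Type*) [NormedAddCommGroup E] [InnerProductSpace ℂ E]
    [FiniteDimensional ℂ E] [Nontrivial E]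
    (P Q : E →ₗ[ℂ] E) (hP2 : P ∘ₗ P = P) (hQ2 : Q ∘ₗ Q = Q) :
    ∃ S : Submodule ℂ E, S ≠ ⊥ ∧ (∀ x ∈ S, P x ∈ S) ∧ (∀ x ∈ S, Q x ∈ S) ∧
      finrank ℂ S ≤ 2 := by
  have hP2' : ∀ x, P (P x) = P x := fun x => congrFun (congrArg DFunLike.coe hP2) x
  have hQ2' : ∀ x, Q (Q x) = Q x := fun x => congrFun (congrArg DFunLike.coe hQ2) x
  by_cases hP : P = 0
  · -- take an eigenvector of Q
    obtain ⟨μ, hμ⟩ := Module.End.exists_eigenvalue (K := ℂ) (V := E) Q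
    obtain ⟨v, hv⟩ := hμ.exists_hasEigenvector
    refine ⟨Submodule.span ℂ {v}, ?_, ?_, ?_, ?_⟩
    · simpa [Submodule.span_singleton_eq_bot] using hv.right
    · intro x hx; simp [hP]
    · intro x hx
      rw [Submodule.mem_span_singleton] at hx ⊢
      obtain ⟨c, rfl⟩ := hx
      exact ⟨c * μ, by rw [map_smul, hv.apply_eq_smul, smul_smul]⟩
    · rw [finrank_span_singleton hv.right]; exact one_le_two
  · -- P ≠ 0 : take eigenvector of P∘Q restricted to range P
    have hrange : LinearMap.range P ≠ ⊥ := by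
      simpa [LinearMap.range_eq_bot] using hP
    have : Nontrivial (LinearMap.range P) := Submodule.nontrivial_iff_ne_bot.mpr hrange
    have hres : ∀ x ∈ LinearMap.range P, (P ∘ₗ Q) x ∈ LinearMap.range P := by
      intro x _; exact ⟨Q x, rfl⟩
    set T : Module.End ℂ (LinearMap.range P) := (P ∘ₗ Q).restrict hres with hT
    obtain ⟨μ, hμ⟩ := Module.End.exists_eigenvalue T
    obtain ⟨v, hv⟩ := hμ.exists_hasEigenvector
    obtain ⟨u, hu⟩ := v.2
    have hPv : P (v : E) = (v : E) := by rw [← hu, hP2']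
    have hPQv : P (Q (v : E)) = μ • (v : E) := by
      have := hv.apply_eq_smul
      have h2 := congrArg (Subtype.val) this
      simpa [hT, LinearMap.restrict_coe_apply] using h2
    refine ⟨Submodule.span ℂ {(v : E), Q (v : E)}, ?_, ?_, ?_, ?_⟩
    · intro h
      have hv0 : (v : E) ∈ Submodule.span ℂ {(v : E), Q (v : E)} :=
        Submodule.subset_span (by simp)
      rw [h, Submodule.mem_bot] at hv0
      exact hv.right (Subtype.ext hv0)
    · intro x hx
      induction hx using Submodule.span_induction with
      | mem z hz =>
        rcases hz with rfl | rfl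
        · rw [hPv]; exact Submodule.subset_span (by simp)
        · rw [hPQv]
          exact Submodule.smul_mem _ _ (Submodule.subset_span (by simp))
      | zero => simp
      | add a b _ _ ha hb => rw [map_add]; exact Submodule.add_mem _ ha hb
      | smul c a _ ha => rw [map_smul]; exact Submodule.smul_mem _ _ ha
    · intro x hx
      induction hx using Submodule.span_induction with
      | mem z hz =>
        rcases hz with rfl | rfl
        · exact Submodule.subset_span (by simp)
        · rw [hQ2']; exact Submodule.subset_span (by simp)
      | zero => simp
      | add a b _ _ ha hb => rw [map_add]; exact Submodule.add_mem _ ha hb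
      | smul c a _ ha => rw [map_smul]; exact Submodule.smul_mem _ _ ha
    · classical
      have h := finrank_span_le_card (R := ℂ) ({(v : E), Q (v : E)} : Set E)
      refine h.trans ?_
      rw [Set.toFinset_insert, Set.toFinset_singleton]
      exact (Finset.card_insert_le _ _).trans (by simp)

universe u

theorem jordan_aux : ∀ (n : ℕ) (E : Type u) [NormedAddCommGroup E] [InnerProductSpace ℂ E]
    [FiniteDimensional ℂ E], finrank ℂ E ≤ n →
    ∀ (P Q : E →ₗ[ℂ] E), P ∘ₗ P = P → Q ∘ₗ Q = Q →
    (∀ x y : E, ⟪P x, y⟫_ℂ = ⟪x, P y⟫_ℂ) → (∀ x y : E, ⟪Q x, y⟫_ℂ = ⟪x, Q y⟫_ℂ) →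
    ∃ (k : ℕ) (S : Fin k → Submodule ℂ E),
      (∀ i j, i ≠ j → ∀ x ∈ S i, ∀ y ∈ S j, ⟪x, y⟫_ℂ = 0) ∧
      (⨆ j, S j) = ⊤ ∧
      (∀ j, ∀ x ∈ S j, P x ∈ S j) ∧
      (∀ j, ∀ x ∈ S j, Q x ∈ S j) ∧
      (∀ j, finrank ℂ (S j) ≤ 2) := by
  intro n
  induction n with
  | zero =>
    intro E _ _ _ hn P Q _ _ _ _
    haveI : Subsingleton E := by
      rw [← finrank_zero_iff (R := ℂ)]; omega
    refine ⟨0, fun i => i.elim0, fun i => i.elim0, ?_, fun i => i.elim0,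
      fun i => i.elim0, fun i => i.elim0⟩
    rw [iSup_of_empty]
    haveI : Subsingleton (Submodule ℂ E) := (Submodule.subsingleton_iff ℂ).mpr ‹_›
    exact Subsingleton.elim _ _
  | succ n ih =>
    intro E _ _ _ hn P Q hP2 hQ2 hPsa hQsa
    have hP2' : ∀ x, P (P x) = P x := fun x => congrFun (congrArg DFunLike.coe hP2) x
    have hQ2' : ∀ x, Q (Q x) = Q x := fun x => congrFun (congrArg DFunLike.coe hQ2) x
    by_cases htriv : Subsingleton E
    · refine ⟨0, fun i => i.elim0, fun i => i.elim0, ?_, fun i => i.elim0,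
        fun i => i.elim0, fun i => i.elim0⟩
      rw [iSup_of_empty]
      haveI : Subsingleton (Submodule ℂ E) := (Submodule.subsingleton_iff ℂ).mpr htriv
      exact Subsingleton.elim _ _
    haveI : Nontrivial E := not_subsingleton_iff_nontrivial.mp htriv
    obtain ⟨S, hSne, hSP, hSQ, hSdim⟩ := exists_invariant_sub E P Q hP2 hQ2
    -- the orthogonal complement is invariant
    have hPperp : ∀ x ∈ Sᗮ, P x ∈ Sᗮ := by
      intro x hx
      rw [Submodule.mem_orthogonal] at hx ⊢
      intro u hu
      rw [← hPsa]
      exact hx (P u) (hSP u hu)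
    have hQperp : ∀ x ∈ Sᗮ, Q x ∈ Sᗮ := by
      intro x hx
      rw [Submodule.mem_orthogonal] at hx ⊢
      intro u hu
      rw [← hQsa]
      exact hx (Q u) (hSQ u hu)
    set P' : Sᗮ →ₗ[ℂ] Sᗮ := P.restrict hPperp with hP'def
    set Q' : Sᗮ →ₗ[ℂ] Sᗮ := Q.restrict hQperp with hQ'def
    have hle : finrank ℂ Sᗮ ≤ n := by
      have hsum : finrank ℂ S + finrank ℂ Sᗮ = finrank ℂ E :=
        S.finrank_add_finrank_orthogonal
      have hSpos : finrank ℂ S ≠ 0 := fun h => hSne (Submodule.finrank_eq_zero.mp h)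
      omega
    have hP2r : P' ∘ₗ P' = P' := by
      ext x
      rw [LinearMap.comp_apply, hP'def, LinearMap.restrict_coe_apply,
        LinearMap.restrict_coe_apply]
      exact hP2' _
    have hQ2r : Q' ∘ₗ Q' = Q' := by
      ext x
      rw [LinearMap.comp_apply, hQ'def, LinearMap.restrict_coe_apply,
        LinearMap.restrict_coe_apply]
      exact hQ2' _
    obtain ⟨k, S', horth', hsup', hPinv', hQinv', hdim'⟩ :=
      ih Sᗮ hle P' Q' hP2r hQ2r
        (fun x y => by
          simp only [Submodule.coe_inner, hP'def, LinearMap.restrict_coe_apply]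
          exact hPsa x y)
        (fun x y => by
          simp only [Submodule.coe_inner, hQ'def, LinearMap.restrict_coe_apply]
          exact hQsa x y)
    refine ⟨k + 1, Fin.cons S (fun j => (S' j).map Sᗮ.subtype), ?_, ?_, ?_, ?_, ?_⟩
    · intro i j hij
      induction i using Fin.cases with
      | zero =>
        induction j using Fin.cases with
        | zero => exact absurd rfl hij
        | succ j =>
          intro x hx y hy
          simp only [Fin.cons_succ] at hy
          obtain ⟨y', hy', rfl⟩ := hy
          exact y'.2 x hx
      | succ i =>
        induction j using Fin.cases with
        | zero =>
          intro x hx y hy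
          simp only [Fin.cons_succ] at hx
          obtain ⟨x', hx', rfl⟩ := hx
          have h0 : ⟪y, Sᗮ.subtype x'⟫_ℂ = 0 := x'.2 y hy
          rw [← inner_conj_symm, h0, map_zero]
        | succ j =>
          intro x hx y hy
          simp only [Fin.cons_succ] at hx hy
          obtain ⟨x', hx', rfl⟩ := hx
          obtain ⟨y', hy', rfl⟩ := hy
          have hij' : i ≠ j := fun h => hij (by rw [h])
          have := horth' i j hij' x' hx' y' hy'
          simpa [Submodule.coe_inner] using this
    · apply le_antisymm le_top
      rw [← Submodule.sup_orthogonal_of_hasOrthogonalProjection (K := S)]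
      apply sup_le
      · exact le_iSup_of_le 0 (by simp)
      · have hperp : Sᗮ = ⨆ j, (S' j).map Sᗮ.subtype := by
          rw [← Submodule.map_iSup, hsup', Submodule.map_subtype_top]
        exact le_trans (le_of_eq hperp)
          (iSup_le fun j => le_iSup_of_le j.succ (by simp [Fin.cons_succ]))
    · intro j
      induction j using Fin.cases with
      | zero => exact hSP
      | succ j =>
        intro x hx
        simp only [Fin.cons_succ] at hx ⊢
        obtain ⟨x', hx', rfl⟩ := hx
        exact ⟨P' x', hPinv' j x' hx', rfl⟩
    · intro j
      induction j using Fin.cases with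
      | zero => exact hSQ
      | succ j =>
        intro x hx
        simp only [Fin.cons_succ] at hx ⊢
        obtain ⟨x', hx', rfl⟩ := hx
        exact ⟨Q' x', hQinv' j x' hx', rfl⟩
    · intro j
      induction j using Fin.cases with
      | zero => exact hSdim
      | succ j =>
        show finrank ℂ ((S' j).map Sᗮ.subtype) ≤ 2
        rw [Submodule.finrank_map_subtype_eq]
        exact hdim' j

/-- Jordan's lemma: for orthogonal projections `P, Q` on a finite-dimensional
complex inner product space `E`, the space decomposes as an internal direct sum of pairwise
orthogonal subspaces of dimension at most 2, each invariant under both `P` and `Q`. -/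
theorem jordan_decomposition_of_two_projections
    (E : Type*) [NormedAddCommGroup E] [InnerProductSpace ℂ E] [FiniteDimensional ℂ E]
    (P Q : E →ₗ[ℂ] E)
    (hP2 : P ∘ₗ P = P) (hQ2 : Q ∘ₗ Q = Q)
    (hPsa : ∀ x y : E, ⟪P x, y⟫_ℂ = ⟪x, P y⟫_ℂ)
    (hQsa : ∀ x y : E, ⟪Q x, y⟫_ℂ = ⟪x, Q y⟫_ℂ) :
    ∃ (k : ℕ) (S : Fin k → Submodule ℂ E),
      (∀ i j, i ≠ j → ∀ x ∈ S i, ∀ y ∈ S j, ⟪x, y⟫_ℂ = 0) ∧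
      DirectSum.IsInternal S ∧
      (∀ j, ∀ x ∈ S j, P x ∈ S j) ∧
      (∀ j, ∀ x ∈ S j, Q x ∈ S j) ∧
      (∀ j, Module.finrank ℂ (S j) ≤ 2) := by
  obtain ⟨k, S, horth, hsup, hPinv, hQinv, hdim⟩ :=
    jordan_aux (finrank ℂ E) E le_rfl P Q hP2 hQ2 hPsa hQsa
  refine ⟨k, S, horth, ?_, hPinv, hQinv, hdim⟩
  rw [DirectSum.isInternal_submodule_iff_iSupIndep_and_iSup_eq_top]
  refine ⟨OrthogonalFamily.independent ?_, hsup⟩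
  intro i j hij v w
  exact horth i j hij v v.2 w w.2
end

section
/- Let λ, n, n', m be positive integers with n ≤ m and n' ≤ m, and set m' = λ + m. Let U ∈ U(2^m), let R' ∈ U(2^{m'−n'}), and let R ∈ U(2^{m'}) satisfy R (|1^{m'−n}⟩ ⊗ |y⟩) = |1^{m'−n}⟩ ⊗ |y⟩ for every y ∈ {0,1}^n. Define the controlled unitary ctrl_{1^λ}-U := (I_{2^λ} − |1^λ⟩⟨1^λ|) ⊗ I_{2^m} + |1^λ⟩⟨1^λ| ⊗ U ∈ U(2^{m'}), and set Q' := (R' ⊗ I_{2^{n'}}) · (ctrl_{1^λ}-U) · R. Then for every 2^n × 2^n complex matrix ρ: Tr₁(Q' (|1^{m'−n}⟩⟨1^{m'−n}| ⊗ ρ) Q'^†) = Tr₁(U (|1^{m−n}⟩⟨1^{m−n}| ⊗ ρ) U†), where on the left Tr₁ is the partial trace over the first 2^{m'−n'}-dimensional tensor factor of ℂ^{2^{m'}} and on the right Tr₁ is the partial trace over the first 2^{m−n'}-dimensional tensor factor of ℂ^{2^m}. -/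
open Matrix
open scoped Kronecker

/-- The identification `ℂ^{2^{a+b}} ≅ ℂ^{2^a} ⊗ ℂ^{2^b}` via binary-string indexing. -/
def splitAt (a b : ℕ) : Fin (2 ^ (a + b)) ≃ Fin (2 ^ a) × Fin (2 ^ b) :=
  (finCongr (pow_add 2 a b)).trans finProdFinEquiv.symm

/-- The identification `ℂ^{2^m} ≅ ℂ^{2^{m−k}} ⊗ ℂ^{2^k}` (for `k ≤ m`). -/
def splitEquiv (m k : ℕ) (h : k ≤ m) : Fin (2 ^ m) ≃ Fin (2 ^ (m - k)) × Fin (2 ^ k) :=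
  (finCongr (by rw [Nat.sub_add_cancel h] : 2 ^ m = 2 ^ (m - k + k))).trans (splitAt (m - k) k)

/-- The index of the all-ones computational basis vector `|1^k⟩` of `ℂ^{2^k}`. -/
def onesIdx (k : ℕ) : Fin (2 ^ k) := ⟨2 ^ k - 1, Nat.sub_lt (Nat.two_pow_pos k) one_pos⟩

/-- The rank-one projection `|1^k⟩⟨1^k|` on `ℂ^{2^k}`. -/
noncomputable def onesProj (k : ℕ) : Matrix (Fin (2 ^ k)) (Fin (2 ^ k)) ℂ :=
  Matrix.single (onesIdx k) (onesIdx k) 1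

/-- The computational basis vector `|1^{m−n}⟩ ⊗ |y⟩` of `ℂ^{2^m}`. -/
noncomputable def basisOnes (n m : ℕ) (h : n ≤ m) (y : Fin (2 ^ n)) : Fin (2 ^ m) → ℂ :=
  Pi.single ((splitEquiv m n h).symm (onesIdx (m - n), y)) 1

/-- The partial trace over the first tensor factor. -/
noncomputable def trFst {a b : Type*} [Fintype a] (M : Matrix (a × b) (a × b) ℂ) :
    Matrix b b ℂ :=
  Matrix.of fun j k => ∑ i, M (i, j) (i, k)

/-- The controlled unitary `ctrl_{1^l}-U = (I_{2^l} − |1^l⟩⟨1^l|) ⊗ I_{2^m} + |1^l⟩⟨1^l| ⊗ U`,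
as a matrix on `ℂ^{2^{l+m}}`. -/
noncomputable def ctrlMat (l m : ℕ) (U : Matrix (Fin (2 ^ m)) (Fin (2 ^ m)) ℂ) :
    Matrix (Fin (2 ^ (l + m))) (Fin (2 ^ (l + m))) ℂ :=
  ((((1 : Matrix (Fin (2 ^ l)) (Fin (2 ^ l)) ℂ) - onesProj l) ⊗ₖ
        (1 : Matrix (Fin (2 ^ m)) (Fin (2 ^ m)) ℂ) +
      onesProj l ⊗ₖ U).submatrix (splitAt l m) (splitAt l m))

/-- `Q' = (R' ⊗ I_{2^{n'}}) · (ctrl_{1^l}-U) · R` on `ℂ^{2^{l+m}}`. -/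
noncomputable def Qprime (l n' m : ℕ) (h : n' ≤ l + m)
    (R' : Matrix (Fin (2 ^ (l + m - n'))) (Fin (2 ^ (l + m - n'))) ℂ)
    (U : Matrix (Fin (2 ^ m)) (Fin (2 ^ m)) ℂ)
    (R : Matrix (Fin (2 ^ (l + m))) (Fin (2 ^ (l + m))) ℂ) :
    Matrix (Fin (2 ^ (l + m))) (Fin (2 ^ (l + m))) ℂ :=
  ((R' ⊗ₖ (1 : Matrix (Fin (2 ^ n')) (Fin (2 ^ n')) ℂ)).submatrix
      (splitEquiv (l + m) n' h) (splitEquiv (l + m) n' h)) * ctrlMat l m U * R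

/-! ### Auxiliary lemmas -/

/-- Gluing `Fin (2^l) × Fin (2^(m-k)) ≃ Fin (2^(l+m-k))` (for `k ≤ m`). -/
def glue (l m k : ℕ) (hk : k ≤ m) : Fin (2 ^ l) × Fin (2 ^ (m - k)) ≃ Fin (2 ^ (l + m - k)) :=
  finProdFinEquiv.trans (finCongr (by rw [← pow_add]; congr 1; omega))

lemma splitAt_symm_val (a b : ℕ) (i : Fin (2 ^ a)) (j : Fin (2 ^ b)) :
    (((splitAt a b).symm (i, j)) : ℕ) = j + 2 ^ b * i := rfl

lemma splitEquiv_symm_val (m k : ℕ) (h : k ≤ m) (i : Fin (2 ^ (m - k))) (j : Fin (2 ^ k)) :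
    (((splitEquiv m k h).symm (i, j)) : ℕ) = j + 2 ^ k * i := rfl

lemma glue_val (l m k : ℕ) (hk : k ≤ m) (p : Fin (2 ^ l) × Fin (2 ^ (m - k))) :
    ((glue l m k hk p) : ℕ) = p.2 + 2 ^ (m - k) * p.1 := rfl

lemma key_split (l m k : ℕ) (hk : k ≤ m) (h : k ≤ l + m)
    (p : Fin (2 ^ l) × Fin (2 ^ (m - k))) (y : Fin (2 ^ k)) :
    (splitEquiv (l + m) k h).symm (glue l m k hk p, y)
      = (splitAt l m).symm (p.1, (splitEquiv m k hk).symm (p.2, y)) := by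
  apply Fin.ext
  rw [splitEquiv_symm_val, splitAt_symm_val, glue_val, splitEquiv_symm_val]
  have h2 : 2 ^ k * 2 ^ (m - k) = 2 ^ m := by rw [← pow_add]; congr 1; omega
  rw [Nat.mul_add, ← Nat.mul_assoc, h2]; ring

lemma glue_ones (l m k : ℕ) (hk : k ≤ m) :
    glue l m k hk (onesIdx l, onesIdx (m - k)) = onesIdx (l + m - k) := by
  apply Fin.ext
  rw [glue_val]
  show 2 ^ (m - k) - 1 + 2 ^ (m - k) * (2 ^ l - 1) = 2 ^ (l + m - k) - 1
  have h2 : 2 ^ (m - k) * 2 ^ l = 2 ^ (l + m - k) := by rw [← pow_add]; congr 1; omega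
  have h3 : 1 ≤ 2 ^ (m - k) := Nat.one_le_two_pow
  have h4 : 1 ≤ 2 ^ l := Nat.one_le_two_pow
  have h5 : 2 ^ (m - k) ≤ 2 ^ (l + m - k) := by rw [← h2]; nlinarith
  rw [Nat.mul_sub, h2, Nat.mul_one]; omega

lemma onesProj_glue (l m k : ℕ) (hk : k ≤ m) (p q : Fin (2 ^ l) × Fin (2 ^ (m - k))) :
    onesProj (l + m - k) (glue l m k hk p) (glue l m k hk q)
      = onesProj l p.1 q.1 * onesProj (m - k) p.2 q.2 := by
  simp only [onesProj, ← glue_ones l m k hk, Matrix.single, of_apply, Equiv.apply_eq_iff_eq,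
    Prod.ext_iff]
  by_cases h1 : onesIdx l = p.1 <;> by_cases h2 : onesIdx (m-k) = p.2 <;>
    by_cases h3 : onesIdx l = q.1 <;> by_cases h4 : onesIdx (m-k) = q.2 <;>
    simp [h1, h2, h3, h4, ite_and, eq_comm] <;> aesop

lemma Mdecomp (l m n : ℕ) (hn : n ≤ m) (h : n ≤ l + m)
    (ρ : Matrix (Fin (2 ^ n)) (Fin (2 ^ n)) ℂ) :
    (onesProj (l + m - n) ⊗ₖ ρ).submatrix (splitEquiv (l + m) n h) (splitEquiv (l + m) n h)
      = ((onesProj l ⊗ₖ ((onesProj (m - n) ⊗ₖ ρ).submatrix (splitEquiv m n hn)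
          (splitEquiv m n hn))).submatrix (splitAt l m) (splitAt l m)) := by
  ext ξ ξ'
  obtain ⟨⟨x, y⟩, rfl⟩ : ∃ p, (splitEquiv (l + m) n h).symm p = ξ :=
    ⟨_, Equiv.symm_apply_apply _ _⟩
  obtain ⟨⟨x', y'⟩, rfl⟩ : ∃ p, (splitEquiv (l + m) n h).symm p = ξ' :=
    ⟨_, Equiv.symm_apply_apply _ _⟩
  obtain ⟨p, rfl⟩ : ∃ q, glue l m n hn q = x := ⟨_, Equiv.apply_symm_apply _ _⟩
  obtain ⟨p', rfl⟩ : ∃ q, glue l m n hn q = x' := ⟨_, Equiv.apply_symm_apply _ _⟩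
  rw [submatrix_apply, submatrix_apply, Equiv.apply_symm_apply, Equiv.apply_symm_apply,
    key_split l m n hn h, key_split l m n hn h, Equiv.apply_symm_apply, Equiv.apply_symm_apply]
  simp only [kroneckerMap_apply, submatrix_apply, Equiv.apply_symm_apply, onesProj_glue]
  ring

lemma kron_conjTranspose {a b c d : Type*} (A : Matrix a b ℂ) (B : Matrix c d ℂ) :
    (A ⊗ₖ B)ᴴ = Aᴴ ⊗ₖ Bᴴ := by
  ext ⟨i, j⟩ ⟨i', j'⟩
  simp [conjTranspose_apply, star_mul']

lemma onesProj_conjTranspose (k : ℕ) : (onesProj k)ᴴ = onesProj k := by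
  ext i j
  simp only [onesProj, conjTranspose_apply, Matrix.single, of_apply]
  by_cases h1 : onesIdx k = i <;> by_cases h2 : onesIdx k = j <;> simp [h1, h2, and_comm]

lemma onesProj_mul_self (k : ℕ) : onesProj k * onesProj k = onesProj k := by
  simp [onesProj, Matrix.single_mul_single_same]

lemma ctrl_core (l m : ℕ) (U X : Matrix (Fin (2 ^ m)) (Fin (2 ^ m)) ℂ) :
    (((1 : Matrix (Fin (2 ^ l)) (Fin (2 ^ l)) ℂ) - onesProj l) ⊗ₖ
        (1 : Matrix (Fin (2 ^ m)) (Fin (2 ^ m)) ℂ) + onesProj l ⊗ₖ U) *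
      (onesProj l ⊗ₖ X) *
      (((1 : Matrix (Fin (2 ^ l)) (Fin (2 ^ l)) ℂ) - onesProj l) ⊗ₖ
        (1 : Matrix (Fin (2 ^ m)) (Fin (2 ^ m)) ℂ) + onesProj l ⊗ₖ U)ᴴ
      = onesProj l ⊗ₖ (U * X * Uᴴ) := by
  have h1 : ((1 : Matrix (Fin (2 ^ l)) (Fin (2 ^ l)) ℂ) - onesProj l) * onesProj l = 0 := by
    rw [sub_mul, one_mul, onesProj_mul_self, sub_self]
  have h2 : onesProj l * ((1 : Matrix (Fin (2 ^ l)) (Fin (2 ^ l)) ℂ) - onesProj l) = 0 := by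
    rw [mul_sub, mul_one, onesProj_mul_self, sub_self]
  rw [conjTranspose_add, kron_conjTranspose, kron_conjTranspose, conjTranspose_sub,
    conjTranspose_one, conjTranspose_one, onesProj_conjTranspose]
  simp only [add_mul, mul_add, ← Matrix.mul_kronecker_mul, h1, h2, onesProj_mul_self,
    Matrix.zero_kronecker, zero_add, add_zero, one_mul, mul_one, Matrix.mul_assoc]

lemma kron_mul_sandwich {a b : Type*} [Fintype a] [Fintype b] [DecidableEq a] [DecidableEq b]
    (R S : Matrix a a ℂ) (Y : Matrix (a × b) (a × b) ℂ) (i i' : a) (j k : b) :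
    ((R ⊗ₖ (1 : Matrix b b ℂ)) * Y * (S ⊗ₖ (1 : Matrix b b ℂ))) (i, j) (i', k)
      = ∑ c, ∑ d, R i c * Y (c, j) (d, k) * S d i' := by
  simp only [Matrix.mul_apply, Fintype.sum_prod_type, kroneckerMap_apply, Matrix.one_apply,
    mul_ite, ite_mul, mul_zero, zero_mul, mul_one, one_mul, Finset.sum_ite_eq,
    Finset.sum_ite_eq', Finset.mem_univ, if_true, Finset.sum_mul, Finset.mul_sum]
  rw [Finset.sum_comm]

lemma trFst_conj {a b : Type*} [Fintype a] [Fintype b] [DecidableEq a] [DecidableEq b]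
    (R : Matrix a a ℂ) (hR : Rᴴ * R = 1) (Y : Matrix (a × b) (a × b) ℂ) :
    trFst ((R ⊗ₖ (1 : Matrix b b ℂ)) * Y * (Rᴴ ⊗ₖ (1 : Matrix b b ℂ))) = trFst Y := by
  ext j k
  have key : ∀ c d : a, ∑ i, star (R i d) * R i c = if d = c then 1 else 0 := by
    intro c d
    have := congrFun (congrFun hR d) c
    simpa [Matrix.mul_apply, Matrix.one_apply, conjTranspose_apply] using this
  show (∑ i, ((R ⊗ₖ (1 : Matrix b b ℂ)) * Y * (Rᴴ ⊗ₖ (1 : Matrix b b ℂ))) (i, j) (i, k))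
      = ∑ c, Y (c, j) (c, k)
  calc (∑ i, ((R ⊗ₖ (1 : Matrix b b ℂ)) * Y * (Rᴴ ⊗ₖ (1 : Matrix b b ℂ))) (i, j) (i, k))
      = ∑ i, ∑ c, ∑ d, R i c * Y (c, j) (d, k) * star (R i d) := by
        refine Finset.sum_congr rfl fun i _ => ?_
        rw [kron_mul_sandwich]
        exact Finset.sum_congr rfl fun c _ => Finset.sum_congr rfl fun d _ => by
          rw [conjTranspose_apply]
    _ = ∑ c, ∑ d, (∑ i, star (R i d) * R i c) * Y (c, j) (d, k) := by
        rw [Finset.sum_comm]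
        refine Finset.sum_congr rfl fun c _ => ?_
        rw [Finset.sum_comm]
        refine Finset.sum_congr rfl fun d _ => ?_
        rw [Finset.sum_mul]
        exact Finset.sum_congr rfl fun i _ => by ring
    _ = ∑ c, Y (c, j) (c, k) := by
        refine Finset.sum_congr rfl fun c _ => ?_
        rw [Finset.sum_congr rfl fun d _ => by rw [key c d]]
        simp

set_option linter.unnecessarySeqFocus false in
lemma fix_mul {N a b : Type*} [Fintype N] [DecidableEq N] [Fintype a] [Fintype b]
    [DecidableEq a] [DecidableEq b] (E : N ≃ a × b) (o : a) (R : Matrix N N ℂ)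
    (hR : ∀ y : b, ∀ r : N, R r (E.symm (o, y)) = if r = E.symm (o, y) then 1 else 0)
    (ρ : Matrix b b ℂ) :
    R * ((Matrix.single o o (1 : ℂ) ⊗ₖ ρ).submatrix E E)
      = (Matrix.single o o (1 : ℂ) ⊗ₖ ρ).submatrix E E := by
  ext r s
  rw [Matrix.mul_apply, ← Equiv.sum_comp E.symm
    (fun c => R r c * (Matrix.single o o (1 : ℂ) ⊗ₖ ρ).submatrix E E c s)]
  simp only [submatrix_apply, Equiv.apply_symm_apply, kroneckerMap_apply, Matrix.single,
    of_apply, Fintype.sum_prod_type]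
  rw [Finset.sum_comm]
  simp only [ite_and, ite_mul, mul_ite, mul_zero, zero_mul, mul_one, one_mul,
    Finset.sum_ite_eq, Finset.sum_ite_eq', Finset.mem_univ, if_true, Finset.sum_const_zero]
  by_cases hs : o = (E s).1
  · rw [if_pos hs]
    rw [Finset.sum_congr rfl fun y _ => by rw [hR y r]]
    have h1 : ∀ y : b, (r = E.symm (o, y)) ↔ (y = (E r).2 ∧ o = (E r).1) := by
      intro y
      constructor
      · intro h; rw [h, Equiv.apply_symm_apply]; exact ⟨rfl, rfl⟩
      · rintro ⟨hy, ho⟩; rw [hy, ho]; simp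
    simp only [h1, ite_and, ite_mul, one_mul, zero_mul, Finset.sum_ite_eq',
      Finset.mem_univ, if_true]
    by_cases hr : o = (E r).1 <;> simp [hr, hs] <;> intro hc <;>
      exact absurd (hr.symm.trans hs) hc
  · simp [hs]

lemma trFst_ones (l m k : ℕ) (hk : k ≤ m) (h : k ≤ l + m)
    (W : Matrix (Fin (2 ^ m)) (Fin (2 ^ m)) ℂ) :
    trFst (((onesProj l ⊗ₖ W).submatrix (splitAt l m) (splitAt l m)).submatrix
        (splitEquiv (l + m) k h).symm (splitEquiv (l + m) k h).symm)
      = trFst (W.submatrix (splitEquiv m k hk).symm (splitEquiv m k hk).symm) := by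
  ext j k'
  show (∑ i, ((onesProj l ⊗ₖ W).submatrix (splitAt l m) (splitAt l m))
        ((splitEquiv (l + m) k h).symm (i, j)) ((splitEquiv (l + m) k h).symm (i, k')))
    = ∑ y, W ((splitEquiv m k hk).symm (y, j)) ((splitEquiv m k hk).symm (y, k'))
  rw [← Equiv.sum_comp (glue l m k hk)
    (fun i => ((onesProj l ⊗ₖ W).submatrix (splitAt l m) (splitAt l m))
        ((splitEquiv (l + m) k h).symm (i, j)) ((splitEquiv (l + m) k h).symm (i, k')))]
  simp only [key_split l m k hk h, submatrix_apply, Equiv.apply_symm_apply,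
    kroneckerMap_apply, Fintype.sum_prod_type]
  simp only [onesProj, Matrix.single, of_apply, and_self, ite_mul, one_mul, zero_mul,
    Finset.sum_ite_eq, Finset.mem_univ, if_true]
  rw [Finset.sum_comm]
  exact Finset.sum_congr rfl fun y _ => by simp

lemma sub_cancel {α β : Type*} (E : α ≃ β) (X : Matrix β β ℂ) :
    (X.submatrix E E).submatrix E.symm E.symm = X := by
  rw [submatrix_submatrix, Equiv.self_comp_symm, submatrix_id_id]

lemma sub_cancel' {α β : Type*} (E : α ≃ β) (Y : Matrix α α ℂ) :
    (Y.submatrix E.symm E.symm).submatrix E E = Y := by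
  rw [submatrix_submatrix, Equiv.symm_comp_self, submatrix_id_id]

/-- with `m' = l + m` and `Q' = (R' ⊗ I_{2^{n'}}) · (ctrl_{1^l}-U) · R`, where
`R` fixes all `|1^{m'−n}⟩ ⊗ |y⟩`, one has
`Tr₁(Q' (|1^{m'−n}⟩⟨1^{m'−n}| ⊗ ρ) Q'†) = Tr₁(U (|1^{m−n}⟩⟨1^{m−n}| ⊗ ρ) U†)`. -/
theorem ctrl_sandwich_functionality (l n n' m : ℕ)
    (hl : 0 < l) (hn0 : 0 < n) (hn'0 : 0 < n') (hm : 0 < m)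
    (hn : n ≤ m) (hn' : n' ≤ m)
    (U : Matrix (Fin (2 ^ m)) (Fin (2 ^ m)) ℂ)
    (hU : U ∈ Matrix.unitaryGroup (Fin (2 ^ m)) ℂ)
    (R' : Matrix (Fin (2 ^ (l + m - n'))) (Fin (2 ^ (l + m - n'))) ℂ)
    (hR' : R' ∈ Matrix.unitaryGroup (Fin (2 ^ (l + m - n'))) ℂ)
    (R : Matrix (Fin (2 ^ (l + m))) (Fin (2 ^ (l + m))) ℂ)
    (hR : R ∈ Matrix.unitaryGroup (Fin (2 ^ (l + m))) ℂ)
    (hRfix : ∀ y : Fin (2 ^ n),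
      R.mulVec (basisOnes n (l + m) (by omega) y) = basisOnes n (l + m) (by omega) y) :
    ∀ ρ : Matrix (Fin (2 ^ n)) (Fin (2 ^ n)) ℂ,
      trFst
          ((Qprime l n' m (by omega) R' U R *
              ((onesProj (l + m - n) ⊗ₖ ρ).submatrix
                (splitEquiv (l + m) n (by omega)) (splitEquiv (l + m) n (by omega))) *
              (Qprime l n' m (by omega) R' U R)ᴴ).submatrix
            (splitEquiv (l + m) n' (by omega)).symm (splitEquiv (l + m) n' (by omega)).symm)
        = trFst
            ((U * ((onesProj (m - n) ⊗ₖ ρ).submatrix (splitEquiv m n hn) (splitEquiv m n hn)) *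
                Uᴴ).submatrix (splitEquiv m n' hn').symm (splitEquiv m n' hn').symm) := by
  intro ρ
  have hnm : n ≤ l + m := by omega
  have hn'm : n' ≤ l + m := by omega
  set E := splitEquiv (l + m) n hnm with hE
  set E' := splitEquiv (l + m) n' hn'm with hE'
  set s := splitAt l m with hs
  set M₀ := (onesProj (m - n) ⊗ₖ ρ).submatrix (splitEquiv m n hn) (splitEquiv m n hn) with hM₀
  set W := U * M₀ * Uᴴ with hW
  -- R fixes the relevant columns
  have hRcol : ∀ y : Fin (2 ^ n), ∀ r,
      R r (E.symm (onesIdx (l + m - n), y)) = if r = E.symm (onesIdx (l + m - n), y) then 1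
        else 0 := by
    intro y r
    have h := congrFun (hRfix y) r
    rw [basisOnes, Matrix.mulVec_single] at h
    simp only [Pi.smul_apply, col_apply, op_smul_eq_mul, mul_one] at h
    rw [h, Pi.single_apply]
  -- step 1: R M Rᴴ = M
  set M := (onesProj (l + m - n) ⊗ₖ ρ).submatrix E E with hM
  have hRM : R * M = M := fix_mul E (onesIdx (l + m - n)) R hRcol ρ
  have hMH : Mᴴ = (onesProj (l + m - n) ⊗ₖ ρᴴ).submatrix E E := by
    rw [hM, conjTranspose_submatrix, kron_conjTranspose, onesProj_conjTranspose]
  have hMR : M * Rᴴ = M := by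
    have h2 : R * ((onesProj (l + m - n) ⊗ₖ ρᴴ).submatrix E E)
        = (onesProj (l + m - n) ⊗ₖ ρᴴ).submatrix E E :=
      fix_mul E (onesIdx (l + m - n)) R hRcol ρᴴ
    calc M * Rᴴ = (R * Mᴴ)ᴴ := by
          rw [conjTranspose_mul, conjTranspose_conjTranspose]
      _ = (Mᴴ)ᴴ := by rw [hMH, h2, ← hMH]
      _ = M := conjTranspose_conjTranspose M
  -- step 2: decompose M
  have hMdec : M = (onesProj l ⊗ₖ M₀).submatrix s s := Mdecomp l m n hn hnm ρ
  -- step 3: ctrl sandwich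
  set A := (((1 : Matrix (Fin (2 ^ l)) (Fin (2 ^ l)) ℂ) - onesProj l) ⊗ₖ
      (1 : Matrix (Fin (2 ^ m)) (Fin (2 ^ m)) ℂ) + onesProj l ⊗ₖ U) with hA
  have hctrl : ctrlMat l m U * M * (ctrlMat l m U)ᴴ = (onesProj l ⊗ₖ W).submatrix s s := by
    rw [ctrlMat, hMdec, conjTranspose_submatrix, submatrix_mul_equiv, submatrix_mul_equiv,
      ← hA, ← hs]
    rw [ctrl_core l m U M₀, ← hW]
  -- unitarity facts
  have hR'u : R'ᴴ * R' = 1 := by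
    have := hR'.1
    rwa [Matrix.star_eq_conjTranspose] at this
  -- assemble
  set S := (R' ⊗ₖ (1 : Matrix (Fin (2 ^ n')) (Fin (2 ^ n')) ℂ)).submatrix E' E' with hS
  have hQ : Qprime l n' m hn'm R' U R = S * ctrlMat l m U * R := rfl
  have hSH : Sᴴ = (R'ᴴ ⊗ₖ (1 : Matrix (Fin (2 ^ n')) (Fin (2 ^ n')) ℂ)).submatrix E' E' := by
    rw [hS, conjTranspose_submatrix, kron_conjTranspose, conjTranspose_one]
  have hsandwich : Qprime l n' m hn'm R' U R * M * (Qprime l n' m hn'm R' U R)ᴴ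
      = S * ((onesProj l ⊗ₖ W).submatrix s s) * Sᴴ := by
    rw [hQ, conjTranspose_mul, conjTranspose_mul]
    calc S * ctrlMat l m U * R * M * (Rᴴ * ((ctrlMat l m U)ᴴ * Sᴴ))
        = S * (ctrlMat l m U * ((R * M) * Rᴴ) * (ctrlMat l m U)ᴴ) * Sᴴ := by
          simp only [Matrix.mul_assoc]
      _ = S * ((onesProj l ⊗ₖ W).submatrix s s) * Sᴴ := by
          rw [hRM, hMR, hctrl]
  have hstrip : (S * ((onesProj l ⊗ₖ W).submatrix s s) * Sᴴ).submatrix E'.symm E'.symm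
      = (R' ⊗ₖ (1 : Matrix (Fin (2 ^ n')) (Fin (2 ^ n')) ℂ))
          * (((onesProj l ⊗ₖ W).submatrix s s).submatrix E'.symm E'.symm)
          * (R'ᴴ ⊗ₖ (1 : Matrix (Fin (2 ^ n')) (Fin (2 ^ n')) ℂ)) := by
    have h0 : (onesProj l ⊗ₖ W).submatrix ⇑s ⇑s
        = (((onesProj l ⊗ₖ W).submatrix ⇑s ⇑s).submatrix ⇑E'.symm ⇑E'.symm).submatrix ⇑E' ⇑E' :=
      (sub_cancel' E' _).symm
    rw [hS, hSH]
    conv_lhs => rw [h0]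
    rw [submatrix_mul_equiv, submatrix_mul_equiv, sub_cancel]
  show trFst ((Qprime l n' m hn'm R' U R * M * (Qprime l n' m hn'm R' U R)ᴴ).submatrix
      E'.symm E'.symm) = trFst (W.submatrix (splitEquiv m n' hn').symm (splitEquiv m n' hn').symm)
  rw [hsandwich, hstrip, trFst_conj R' hR'u, hs, hE']
  exact trFst_ones l m n' hn' hn'm W
end

section
/- Let a and b be finite types, let M be a complex matrix indexed by (a × b) × (a × b), and let U be a unitary complex matrix indexed by a × a. Then Tr₁((U ⊗ I_b) · M · (U ⊗ I_b)†) = Tr₁(M). -/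
open Matrix
open scoped Kronecker

/-- conjugating by `U ⊗ I` does not change the partial trace over the first
factor: `Tr₁((U ⊗ I) M (U ⊗ I)†) = Tr₁(M)`. -/
theorem trFst_conj_kronecker_one
    (a b : Type*) [Fintype a] [Fintype b] [DecidableEq a] [DecidableEq b]
    (M : Matrix (a × b) (a × b) ℂ)
    (U : Matrix a a ℂ) (hU : U ∈ Matrix.unitaryGroup a ℂ) :
    trFst ((U ⊗ₖ (1 : Matrix b b ℂ)) * M * (U ⊗ₖ (1 : Matrix b b ℂ))ᴴ) = trFst M := by
  have hUU : Uᴴ * U = 1 := hU.1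
  ext j k
  show ∑ i, ((U ⊗ₖ (1 : Matrix b b ℂ)) * M * (U ⊗ₖ (1 : Matrix b b ℂ))ᴴ) (i, j) (i, k)
      = ∑ i, M (i, j) (i, k)
  simp only [mul_apply, conjTranspose_apply, kroneckerMap_apply, one_apply, Fintype.sum_prod_type]
  simp only [mul_one, apply_ite star, star_zero, mul_ite, mul_zero, ite_mul, zero_mul,
    Finset.sum_ite_eq, Finset.sum_ite_eq', Finset.mem_univ, if_true]
  have key : ∀ x1 x2 : a, ∑ x, (starRingEnd ℂ) (U x x1) * U x x2 = (Uᴴ * U) x1 x2 := by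
    intro x1 x2; rw [mul_apply]
    exact Finset.sum_congr rfl fun i _ => by rw [conjTranspose_apply]; rfl
  calc ∑ x : a, ∑ x1 : a, (∑ x2 : a, U x x2 * M (x2, j) (x1, k)) * star (U x x1)
      = ∑ x1 : a, ∑ x2 : a, M (x2, j) (x1, k) * ∑ x, (starRingEnd ℂ) (U x x1) * U x x2 := by
        simp only [Finset.sum_mul, Finset.mul_sum]
        rw [Finset.sum_comm]
        refine Finset.sum_congr rfl fun x1 _ => ?_
        rw [Finset.sum_comm]
        exact Finset.sum_congr rfl fun x2 _ => Finset.sum_congr rfl fun x _ => by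
          simp only [RCLike.star_def]; ring
    _ = ∑ i : a, M (i, j) (i, k) := by
        simp [key, hUU, one_apply, mul_ite, Finset.sum_ite_eq', Finset.sum_ite_eq]
end
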